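/- Refined telescoping identity: for natural numbers m, k, v, r, the truncated sums Φ_{m,k,v,r}(y,z) = Σ_{t=r}^{m} C(m,t) C(m,k-t) · [P(y,v+m)/P(y,v+t)] · [P(z,v+m+t)/P(z,v+k)] satisfy Φ_{m,k,v+1,r} - Φ_{m,k,v,r} + (k+1)(2v+k+m+2) Φ_{m,k+1,v,r} = r(2v+r+m+1) C(m,r) C(m, k-r+1) · [P(y, v+m) P(z, v+m+r)] / [P(y, v+r) P(z, v+k+1)]. -/

import Mathlib

open Finset

/-- Generalized binomial coefficient C(α, n) = α(α-1)⋯(α-n+1)/n!. -/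
noncomputable def gchoose {K : Type*} [Field K] (α : K) (n : ℕ) : K :=
  (∏ i ∈ Finset.range n, (α - i)) / (n.factorial : K)

/-- Rising factorial (a)↑_c = a(a+1)⋯(a+c-1). -/
def asc {R : Type*} [CommRing R] (a : R) (c : ℕ) : R :=
  ∏ i ∈ Finset.range c, (a + i)

/-- Falling factorial (a)↓_c = a(a-1)⋯(a-c+1). -/
def desc {R : Type*} [CommRing R] (a : R) (c : ℕ) : R :=
  ∏ i ∈ Finset.range c, (a - i)

/-- P(a,b) = (a+b)(a+b-1)⋯(a-b), a product of 2b+1 consecutive terms. -/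
def PP {R : Type*} [CommRing R] (a : R) (b : ℕ) : R :=
  ∏ j ∈ Finset.range (2*b+1), (a + (b : R) - j)

/-- The polynomial ∏_{j=lo}^{hi} (y² - (v+j)²), i.e. P(y, v+hi)/P(y, v+lo-1). -/
def Pratio {R : Type*} [CommRing R] (y : R) (v lo hi : ℕ) : R :=
  ∏ j ∈ Finset.Icc lo hi, (y^2 - ((v + j : ℕ) : R)^2)

/-- h_{1,m,u}(x;y). -/
noncomputable def h1 {R : Type*} [CommRing R] [Algebra ℚ R] (m u : ℕ) (x y : R) : R :=
  ∑ s ∈ Finset.range (m+1),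
    algebraMap ℚ R ((-1)^s * (m.choose s : ℚ) / gchoose ((m : ℚ) + u + s + 1/2) (m+1))
      * PP x (m + u + s) * Pratio y u (s+1) m

/-- h_{ℓ,m,u}(x; y₁,…,y_ℓ). -/
noncomputable def hgen {R : Type*} [CommRing R] [Algebra ℚ R] (ℓ m u : ℕ)
    (x : R) (y : Fin ℓ → R) : R :=
  ∑ s ∈ Fintype.piFinset (fun _ : Fin ℓ => Finset.range (m+1)),
    (fun S : ℕ → ℕ =>
      algebraMap ℚ R ((-1)^(S ℓ) / gchoose ((m : ℚ) + u + S ℓ + 1/2) (m+1))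
        * PP x (m + u + S ℓ)
        * ∏ i : Fin ℓ,
            (algebraMap ℚ R (m.choose (s i) : ℚ)
              * Pratio (y i) u (S ((i : ℕ) + 1) + 1) (m + S (i : ℕ))))
    (fun k => ∑ i ∈ Finset.univ.filter (fun i : Fin ℓ => (i : ℕ) < k), s i)

/-- Φ_{m,k,v}(y,z), with the convention that C(m, k-t) = 0 when t > k. -/
def Phi {R : Type*} [CommRing R] (m k v : ℕ) (y z : R) : R :=
  ∑ t ∈ Finset.range (m+1),
    ((m.choose t : R) * (if t ≤ k then (m.choose (k - t) : R) else 0))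
      * Pratio y v (t+1) m * Pratio z v (k+1) (m+t)

/-- The truncated sums Φ_{m,k,v,r}. -/
def PhiTr (m k v r : ℕ) (y z : ℚ) : ℚ :=
  ∑ t ∈ Finset.Icc r m,
    ((m.choose t : ℚ) * (if t ≤ k then (m.choose (k - t) : ℚ) else 0))
      * Pratio y v (t+1) m * Pratio z v (k+1) (m+t)

section Aux

lemma Pratio_of_lt (y : ℚ) (v lo hi : ℕ) (h : hi < lo) : Pratio y v lo hi = 1 := by
  rw [Pratio, Finset.Icc_eq_empty (by omega), Finset.prod_empty]

lemma Pratio_left (y : ℚ) (v lo hi : ℕ) (h : lo ≤ hi) :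
    Pratio y v lo hi = (y^2 - ((v + lo : ℕ) : ℚ)^2) * Pratio y v (lo+1) hi := by
  rw [Pratio, Pratio, ← Finset.Ioc_insert_left h, Finset.prod_insert (by simp),
    Finset.Icc_add_one_left_eq_Ioc]

lemma Pratio_right (y : ℚ) (v lo hi : ℕ) (h : lo ≤ hi + 1) :
    Pratio y v lo (hi+1) = Pratio y v lo hi * (y^2 - ((v + (hi+1) : ℕ) : ℚ)^2) := by
  rw [Pratio, Pratio, ← Finset.Ico_insert_right h, Finset.prod_insert (by simp),
    Finset.Ico_add_one_right_eq_Icc]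
  ring

lemma Pratio_shift (y : ℚ) (v lo hi : ℕ) :
    Pratio y (v+1) lo hi = Pratio y v (lo+1) (hi+1) := by
  rw [Pratio, Pratio, show Finset.Icc (lo+1) (hi+1) = (Finset.Icc lo hi).image (· + 1) by
    rw [Finset.image_add_right_Icc]]
  rw [Finset.prod_image (by intro a _ b _ h; beta_reduce at h; omega)]
  refine Finset.prod_congr rfl fun j hj => ?_
  push_cast; ring

lemma choose_cast_rel (m j : ℕ) (h : j ≤ m) :
    (m.choose (j+1) : ℚ) * ((j:ℚ)+1) = ((m:ℚ) - j) * (m.choose j) := by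
  have h1 := Nat.choose_succ_right_eq m j
  have h2 : ((m.choose (j+1) * (j+1) : ℕ) : ℚ) = ((m.choose j * (m - j) : ℕ) : ℚ) := by
    exact_mod_cast congrArg (Nat.cast (R := ℚ)) h1
  push_cast [Nat.cast_sub h] at h2
  linarith

lemma key (m k v r : ℕ) (hrm : r ≤ m) (y z : ℚ) :
    ((m.choose r : ℚ) * (if r ≤ k then (m.choose (k - r) : ℚ) else 0))
        * Pratio y (v+1) (r+1) m * Pratio z (v+1) (k+1) (m+r)
      - ((m.choose r : ℚ) * (if r ≤ k then (m.choose (k - r) : ℚ) else 0))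
        * Pratio y v (r+1) m * Pratio z v (k+1) (m+r)
      + ((k:ℚ)+1) * (2*(v:ℚ) + k + m + 2)
        * (((m.choose r : ℚ) * (if r ≤ k+1 then (m.choose (k+1 - r) : ℚ) else 0))
            * Pratio y v (r+1) m * Pratio z v (k+2) (m+r)) =
    (r:ℚ) * (2*(v:ℚ) + r + m + 1) * (m.choose r : ℚ)
        * (if r ≤ k + 1 then (m.choose (k + 1 - r) : ℚ) else 0)
        * Pratio y v (r+1) m * Pratio z v (k+2) (m+r)
    - ((r+1:ℕ):ℚ) * (2*(v:ℚ) + (r+1:ℕ) + m + 1) * (m.choose (r+1) : ℚ)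
        * (if r+1 ≤ k + 1 then (m.choose (k + 1 - (r+1)) : ℚ) else 0)
        * Pratio y v ((r+1)+1) m * Pratio z v (k+2) (m+(r+1)) := by
  rcases lt_trichotomy (k+1) r with hc | hc | hc
  · rw [if_neg (show ¬(r ≤ k) by omega), if_neg (show ¬(r ≤ k+1) by omega),
      if_neg (show ¬(r+1 ≤ k+1) by omega)]
    ring
  · -- r = k + 1
    rw [if_neg (show ¬(r ≤ k) by omega), if_pos (show r ≤ k+1 by omega),
      if_neg (show ¬(r+1 ≤ k+1) by omega)]
    rw [show k + 1 - r = 0 by omega, Nat.choose_zero_right]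
    have hq : (r : ℚ) = (k : ℚ) + 1 := by exact_mod_cast hc.symm
    push_cast
    rw [hq]; ring
  · -- r ≤ k
    have hrk : r ≤ k := by omega
    obtain ⟨j, rfl⟩ : ∃ j, k = r + j := ⟨k - r, by omega⟩
    rw [if_pos hrk, if_pos (show r ≤ r+j+1 by omega), if_pos (show r+1 ≤ r+j+1 by omega)]
    rw [show r + j - r = j by omega, show r + j + 1 - r = j + 1 by omega,
      show r + j + 1 - (r+1) = j by omega]
    by_cases hjm : m < j
    · rw [Nat.choose_eq_zero_of_lt hjm, Nat.choose_eq_zero_of_lt (show m < j+1 by omega)]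
      push_cast; ring
    · push_neg at hjm
      rcases eq_or_lt_of_le hrm with hrm' | hrm'
      · subst hrm'
        rcases eq_or_lt_of_le hjm with hjm' | hjm'
        · subst hjm'
          -- r = m = j, k = 2j
          rw [Pratio_shift y v (j+1) j, Pratio_shift z v (j+j+1) (j+j),
            show j.choose (j+1) = 0 from Nat.choose_eq_zero_of_lt (by omega)]
          rw [Pratio_of_lt y v (j+1+1) (j+1) (by omega), Pratio_of_lt y v (j+1) j (by omega),
            Pratio_of_lt y v (j+1+1) j (by omega),
            Pratio_of_lt z v (j+j+1+1) (j+j+1) (by omega),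
            Pratio_of_lt z v (j+j+1) (j+j) (by omega),
            Pratio_of_lt z v (j+j+2) (j+j) (by omega),
            Pratio_of_lt z v (j+j+2) (j+(j+1)) (by omega)]
          push_cast; ring
        · -- r = m, j < m, k = r + j
          rw [Pratio_shift y v (r+1) r, Pratio_shift z v (r+j+1) (r+r),
            show r.choose (r+1) = 0 from Nat.choose_eq_zero_of_lt (by omega)]
          rw [Pratio_of_lt y v (r+1+1) (r+1) (by omega), Pratio_of_lt y v (r+1) r (by omega),
            Pratio_of_lt y v (r+1+1) r (by omega)]
          rw [show Pratio z v (r+j+1+1) (r+r+1)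
              = Pratio z v (r+j+2) (r+r) * (z^2 - ((v+(r+r+1) : ℕ) : ℚ)^2) from
            Pratio_right z v (r+j+2) (r+r) (by omega)]
          rw [show Pratio z v (r+j+1) (r+r)
              = (z^2 - ((v+(r+j+1) : ℕ) : ℚ)^2) * Pratio z v (r+j+2) (r+r) from
            Pratio_left z v (r+j+1) (r+r) (by omega)]
          rw [show Pratio z v (r+j+2) (r+(r+1))
              = Pratio z v (r+j+2) (r+r) * (z^2 - ((v+(r+r+1) : ℕ) : ℚ)^2) from
            Pratio_right z v (r+j+2) (r+r) (by omega)]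
          have e1 : (r.choose (j+1) : ℚ) = ((r:ℚ)-j) * (r.choose j) / ((j:ℚ)+1) := by
            rw [eq_div_iff (by positivity)]; exact choose_cast_rel r j (by omega)
          rw [e1]
          push_cast
          field_simp
          ring
      · rcases eq_or_lt_of_le hjm with hjm' | hjm'
        · subst hjm'
          -- r < m = j, k = r + j
          rw [Pratio_shift y v (r+1) j, Pratio_shift z v (r+j+1) (j+r),
            show j.choose (j+1) = 0 from Nat.choose_eq_zero_of_lt (by omega)]
          rw [Pratio_of_lt z v (r+j+1+1) (j+r+1) (by omega),
            Pratio_of_lt z v (r+j+1) (j+r) (by omega),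
            Pratio_of_lt z v (r+j+2) (j+r) (by omega),
            Pratio_of_lt z v (r+j+2) (j+(r+1)) (by omega)]
          rw [show Pratio y v (r+1+1) (j+1)
              = Pratio y v (r+2) j * (y^2 - ((v+(j+1) : ℕ) : ℚ)^2) from
            Pratio_right y v (r+2) j (by omega)]
          rw [show Pratio y v (r+1) j
              = (y^2 - ((v+(r+1) : ℕ) : ℚ)^2) * Pratio y v (r+2) j from
            Pratio_left y v (r+1) j (by omega)]
          rw [show Pratio y v (r+1+1) j = Pratio y v (r+2) j from by norm_num]
          have e2 : (j.choose (r+1) : ℚ) = ((j:ℚ)-r) * (j.choose r) / ((r:ℚ)+1) := by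
            rw [eq_div_iff (by positivity)]; exact choose_cast_rel j r (by omega)
          rw [e2]
          push_cast
          field_simp
          ring
        · -- generic: r < m, j < m
          rw [Pratio_shift y v (r+1) m, Pratio_shift z v (r+j+1) (m+r)]
          rw [show Pratio y v (r+1+1) (m+1)
              = Pratio y v (r+2) m * (y^2 - ((v+(m+1) : ℕ) : ℚ)^2) from
            Pratio_right y v (r+2) m (by omega)]
          rw [show Pratio z v (r+j+1+1) (m+r+1)
              = Pratio z v (r+j+2) (m+r) * (z^2 - ((v+(m+r+1) : ℕ) : ℚ)^2) from
            Pratio_right z v (r+j+2) (m+r) (by omega)]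
          rw [show Pratio y v (r+1) m
              = (y^2 - ((v+(r+1) : ℕ) : ℚ)^2) * Pratio y v (r+2) m from
            Pratio_left y v (r+1) m (by omega)]
          rw [show Pratio z v (r+j+1) (m+r)
              = (z^2 - ((v+(r+j+1) : ℕ) : ℚ)^2) * Pratio z v (r+j+2) (m+r) from
            Pratio_left z v (r+j+1) (m+r) (by omega)]
          rw [show Pratio y v (r+1+1) m = Pratio y v (r+2) m from by norm_num]
          rw [show Pratio z v (r+j+2) (m+(r+1))
              = Pratio z v (r+j+2) (m+r) * (z^2 - ((v+(m+r+1) : ℕ) : ℚ)^2) from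
            Pratio_right z v (r+j+2) (m+r) (by omega)]
          have e1 : (m.choose (j+1) : ℚ) = ((m:ℚ)-j) * (m.choose j) / ((j:ℚ)+1) := by
            rw [eq_div_iff (by positivity)]; exact choose_cast_rel m j hjm
          have e2 : (m.choose (r+1) : ℚ) = ((m:ℚ)-r) * (m.choose r) / ((r:ℚ)+1) := by
            rw [eq_div_iff (by positivity)]; exact choose_cast_rel m r hrm
          rw [e1, e2]
          push_cast
          field_simp
          ring

lemma PhiTr_zero (m k v r : ℕ) (y z : ℚ) (h : m < r) : PhiTr m k v r y z = 0 := by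
  rw [PhiTr, Finset.Icc_eq_empty (by omega), Finset.sum_empty]

lemma statement9_aux (m k v : ℕ) (y z : ℚ) : ∀ n r, m + 1 ≤ r + n →
    PhiTr m k (v+1) r y z - PhiTr m k v r y z
        + ((k:ℚ)+1) * (2*(v:ℚ) + k + m + 2) * PhiTr m (k+1) v r y z =
      (r:ℚ) * (2*(v:ℚ) + r + m + 1) * (m.choose r : ℚ)
        * (if r ≤ k + 1 then (m.choose (k + 1 - r) : ℚ) else 0)
        * Pratio y v (r+1) m * Pratio z v (k+2) (m+r) := by
  intro n
  induction n with
  | zero =>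
    intro r h
    rw [PhiTr_zero m k (v+1) r y z (by omega), PhiTr_zero m k v r y z (by omega),
      PhiTr_zero m (k+1) v r y z (by omega), Nat.choose_eq_zero_of_lt (by omega)]
    push_cast; ring
  | succ n ih =>
    intro r h
    rcases le_or_gt r m with hrm | hrm
    · have hins : Finset.Icc r m = insert r (Finset.Icc (r+1) m) := by
        rw [Finset.Icc_add_one_left_eq_Ioc, Finset.Ioc_insert_left hrm]
      have hsum : ∀ k' v', PhiTr m k' v' r y z =
          ((m.choose r : ℚ) * (if r ≤ k' then (m.choose (k' - r) : ℚ) else 0))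
            * Pratio y v' (r+1) m * Pratio z v' (k'+1) (m+r)
          + PhiTr m k' v' (r+1) y z := by
        intro k' v'
        rw [PhiTr, PhiTr, hins, Finset.sum_insert (by simp)]
      rw [hsum k (v+1), hsum k v, hsum (k+1) v]
      simp only [show k+1+1 = k+2 by omega]
      linear_combination (key m k v r hrm y z) + (ih (r+1) (by omega))
    · rw [PhiTr_zero m k (v+1) r y z (by omega), PhiTr_zero m k v r y z (by omega),
        PhiTr_zero m (k+1) v r y z (by omega), Nat.choose_eq_zero_of_lt (by omega)]
      push_cast; ring

end Aux

/-- refined telescoping identity for the truncated sums. -/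
theorem statement9 (m k v r : ℕ) (y z : ℚ) :
    PhiTr m k (v+1) r y z - PhiTr m k v r y z
        + ((k:ℚ)+1) * (2*(v:ℚ) + k + m + 2) * PhiTr m (k+1) v r y z =
      (r:ℚ) * (2*(v:ℚ) + r + m + 1) * (m.choose r : ℚ)
        * (if r ≤ k + 1 then (m.choose (k + 1 - r) : ℚ) else 0)
        * Pratio y v (r+1) m * Pratio z v (k+2) (m+r) := by
  exact statement9_aux m k v y z (m+1) r (by omega)
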